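/- Extended proofs are conservative: if the formula (¬A₁ ∨ β₁) ∧ (¬β₁ ∨ A₁) ∧ ... ∧ (¬A_h ∨ β_h) ∧ (¬β_h ∨ A_h) → α is valid, where A₁,...,A_h are distinct extension variables with A₁ not occurring in β₁ or α, ..., A_h not occurring in β₁,...,β_h or α, then α itself is valid. -/

import Mathlib

/-- Formulae of the calculus of structures in negation normal form. -/
inductive Formula : Type
  | top : Formula
  | bot : Formula
  | atom : ℕ → Formula
  | natom : ℕ → Formula
  | or : Formula → Formula → Formula
  | and : Formula → Formula → Formula
deriving DecidableEq

/-- Boolean evaluation of a formula under an assignment. -/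
def Formula.eval (v : ℕ → Bool) : Formula → Bool
  | .top => true
  | .bot => false
  | .atom n => v n
  | .natom n => !(v n)
  | .or a b => a.eval v || b.eval v
  | .and a b => a.eval v && b.eval v

/-- Size of a formula: number of unit and atom occurrences. -/
def Formula.size : Formula → ℕ
  | .top => 1
  | .bot => 1
  | .atom _ => 1
  | .natom _ => 1
  | .or a b => a.size + b.size
  | .and a b => a.size + b.size

/-- De Morgan dual (negation in negation normal form). -/
def Formula.dual : Formula → Formula
  | .top => .bot
  | .bot => .top
  | .atom n => .natom n
  | .natom n => .atom n
  | .or a b => .and a.dual b.dual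
  | .and a b => .or a.dual b.dual

/-- `occursVar a φ`: the variable `a` occurs (as `a` or `¬a`) in `φ`. -/
def occursVar (a : ℕ) : Formula → Prop
  | .top => False
  | .bot => False
  | .atom n => n = a
  | .natom n => n = a
  | .or x y => occursVar a x ∨ occursVar a y
  | .and x y => occursVar a x ∨ occursVar a y

/-- The conjunction of the extension axioms
`(¬A_i ∨ β_i) ∧ (¬β_i ∨ A_i)` for `i = 1, ..., h`. -/
def extAxioms (h : ℕ) (A : Fin h → ℕ) (β : Fin h → Formula) : Formula :=
  (List.ofFn fun i : Fin h =>
      Formula.and (.or (.natom (A i)) (β i)) (.or (β i).dual (.atom (A i)))).foldr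
    .and .top

/-!
Given an assignment `v`, redefine `A₁, …, A_h` in turn, setting `A_k` to the value of `β_k` under
the assignment built so far. Since `A_k` does not occur in `β₁, …, β_k` and the later steps only
touch the variables `A_{k+1}, …, A_h`, the final assignment satisfies every extension axiom
`A_k ↔ β_k`; so it satisfies `α`. It differs from `v` only on the `A_k`, which do not occur in `α`,
hence `v` satisfies `α` as well.
-/

open Function

namespace Formula

theorem eval_congr {φ : Formula} {u w : ℕ → Bool} (h : ∀ a, occursVar a φ → u a = w a) :
    φ.eval u = φ.eval w := by
  induction φ with
  | top | bot => rfl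
  | atom n => exact h n rfl
  | natom n => simp only [eval, h n rfl]
  | or x y ihx ihy | and x y ihx ihy =>
    simp only [eval, ihx fun a ha => h a (.inl ha), ihy fun a ha => h a (.inr ha)]

theorem eval_dual (φ : Formula) (v : ℕ → Bool) : φ.dual.eval v = !φ.eval v := by
  induction φ <;> simp_all [dual, eval]

theorem eval_foldr_and_eq_true_iff (l : List Formula) (v : ℕ → Bool) :
    (l.foldr and top).eval v = true ↔ ∀ φ ∈ l, φ.eval v = true := by
  induction l with
  | nil => simp [eval]
  | cons x xs ih => simp [eval, ih]

end Formula

open Formula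

theorem eval_extAxioms_eq_true_iff {h : ℕ} (A : Fin h → ℕ) (β : Fin h → Formula) (v : ℕ → Bool) :
    (extAxioms h A β).eval v = true ↔ ∀ i, v (A i) = (β i).eval v := by
  simp only [extAxioms, eval_foldr_and_eq_true_iff, List.forall_mem_ofFn_iff, Formula.eval,
    eval_dual]
  refine forall_congr' fun i => ?_
  cases v (A i) <;> cases (β i).eval v <;> simp

section Extension

variable {h : ℕ} (A : Fin h → ℕ) (β : Fin h → Formula) (v : ℕ → Bool)

def extendAssignment : ℕ → ℕ → Bool
  | 0 => v
  | k + 1 =>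
    if hk : k < h then
      update (extendAssignment k) (A ⟨k, hk⟩) ((β ⟨k, hk⟩).eval (extendAssignment k))
    else extendAssignment k

variable {A β v}

theorem extendAssignment_apply_eq_of_le {n k m : ℕ} (hkm : k ≤ m)
    (hn : ∀ i : Fin h, k ≤ i → n ≠ A i) :
    extendAssignment A β v m n = extendAssignment A β v k n := by
  induction m, hkm using Nat.le_induction with
  | base => rfl
  | succ m hkm ih =>
    rw [extendAssignment]
    split_ifs with hm
    · rw [update_of_ne (hn ⟨m, hm⟩ hkm), ih]
    · exact ih

theorem eval_extendAssignment_eq_of_le {φ : Formula} {k m : ℕ} (hkm : k ≤ m)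
    (hφ : ∀ i : Fin h, k ≤ i → ¬occursVar (A i) φ) :
    φ.eval (extendAssignment A β v m) = φ.eval (extendAssignment A β v k) :=
  eval_congr fun _ ha => extendAssignment_apply_eq_of_le hkm fun i hi hai => hφ i hi (hai ▸ ha)

theorem extendAssignment_succ_apply_self (i : Fin h) :
    extendAssignment A β v (i + 1) (A i) = (β i).eval (extendAssignment A β v i) := by
  simp only [extendAssignment, dif_pos i.2, Fin.eta, update_self]

theorem extendAssignment_apply_eq_eval (hinj : Injective A)
    (hβ : ∀ i j : Fin h, j ≤ i → ¬occursVar (A i) (β j)) (i : Fin h) :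
    extendAssignment A β v h (A i) = (β i).eval (extendAssignment A β v h) := by
  have hlater : extendAssignment A β v h (A i) = extendAssignment A β v (i + 1) (A i) :=
    extendAssignment_apply_eq_of_le i.2 fun j hj hij => by
      have := congrArg Fin.val (hinj hij)
      omega
  rw [hlater, extendAssignment_succ_apply_self,
    eval_extendAssignment_eq_of_le i.2.le fun j hj => hβ j i hj]

end Extension

/-- extended proofs are conservative. If the implication from the
extension axioms to `α` is valid, with each extension variable `A_i` fresh (not
occurring in `β_1, ..., β_i` nor in `α`, all `A_i` distinct), then `α` is valid. -/
theorem extension_conservative (h : ℕ) (A : Fin h → ℕ) (β : Fin h → Formula)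
    (α : Formula)
    (hinj : Function.Injective A)
    (hα : ∀ i : Fin h, ¬ occursVar (A i) α)
    (hβ : ∀ i j : Fin h, j ≤ i → ¬ occursVar (A i) (β j))
    (hvalid : ∀ v : ℕ → Bool, (extAxioms h A β).eval v = true → α.eval v = true) :
    ∀ v : ℕ → Bool, α.eval v = true := by
  intro v
  have hmodel : (extAxioms h A β).eval (extendAssignment A β v h) = true :=
    (eval_extAxioms_eq_true_iff A β _).2 (extendAssignment_apply_eq_eval hinj hβ)
  have hα_unchanged : α.eval (extendAssignment A β v h) = α.eval v :=
    eval_extendAssignment_eq_of_le (Nat.zero_le h) fun i _ => hα i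
  rw [← hα_unchanged]
  exact hvalid _ hmodel
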